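/- Let X and Y be real Fréchet spaces and T : X → Y a surjective continuous linear map. If A ⊆ X is a closed polyhedral cone, then the image T(A) is a closed polyhedral cone in Y. -/

import Mathlib

/-- A subset `P` of a real topological vector space `X` is a closed polyhedral cone if
there exist a positive integer `n` and continuous linear functionals `f₁,…,fₙ` on `X`
such that `P = {x : fₖ x ≤ 0 for all k}`. -/
def IsClosedPolyhedralCone {X : Type*} [AddCommGroup X] [Module ℝ X] [TopologicalSpace X]
    (P : Set X) : Prop :=
  ∃ n : ℕ, 0 < n ∧ ∃ f : Fin n → X →L[ℝ] ℝ,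
    P = {x : X | ∀ k, f k x ≤ 0}

/-!
Write `A = φ⁻¹' Q` with `φ = (f₁, …, fₙ) : X → ℝⁿ` and `Q` the nonpositive orthant. Then
`T(A) = T(A + ker T)` and `A + ker T = φ⁻¹' (Q + φ(ker T))`. Since `φ(ker T)` is finite
dimensional, Fourier–Motzkin elimination writes `Q + φ(ker T)` as `{g₁ ≤ 0, …, gₘ ≤ 0}`. Every
`gⱼ ∘ φ` is nonpositive on the subspace `ker T`, hence vanishes there and factors as `hⱼ ∘ T`;
`hⱼ` is continuous because `T` is open by the open mapping theorem for Fréchet spaces. Thus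
`T(A) = {h₁ ≤ 0, …, hₘ ≤ 0}`.
-/

open Set Filter Function Topology Pointwise Uniformity

theorem Set.Finite.nonempty_upperBounds_inter_lowerBounds {α : Type*} [LinearOrder α]
    [Nonempty α] {s t : Set α} (hs : s.Finite) (ht : t.Finite) (hst : ∀ a ∈ s, ∀ b ∈ t, a ≤ b) :
    (upperBounds s ∩ lowerBounds t).Nonempty := by
  rcases s.eq_empty_or_nonempty with rfl | hne
  · obtain ⟨c, hc⟩ := ht.bddBelow
    exact ⟨c, by simp, hc⟩
  · obtain ⟨a, ha, hmax⟩ := exists_max_image s (fun a => a) hs hne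
    exact ⟨a, hmax, hst a ha⟩

theorem mem_add_span_singleton_iff {R M : Type*} [Ring R] [AddCommGroup M] [Module R M]
    {P : Set M} {e x : M} :
    x ∈ P + (R ∙ e : Set M) ↔ ∃ t : R, x - t • e ∈ P := by
  simp only [Set.mem_add, SetLike.mem_coe, Submodule.mem_span_singleton]
  constructor
  · rintro ⟨p, hp, _, ⟨t, rfl⟩, rfl⟩
    exact ⟨t, by simpa using hp⟩
  · rintro ⟨t, ht⟩
    exact ⟨_, ht, t • e, ⟨t, rfl⟩, sub_add_cancel x _⟩

theorem LinearMap.preimage_add_submodule {R M N : Type*} [Ring R] [AddCommGroup M] [Module R M]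
    [AddCommGroup N] [Module R N] (φ : M →ₗ[R] N) (Q : Set N) (K : Submodule R M) :
    φ ⁻¹' Q + K = φ ⁻¹' (Q + K.map φ) := by
  ext x
  simp only [Set.mem_add, mem_preimage, SetLike.mem_coe, Submodule.mem_map]
  constructor
  · rintro ⟨a, ha, k, hk, rfl⟩
    exact ⟨φ a, ha, φ k, ⟨k, hk, rfl⟩, (map_add φ a k).symm⟩
  · rintro ⟨q, hq, _, ⟨k, hk, rfl⟩, hx⟩
    exact ⟨x - k, by rwa [map_sub, ← hx, add_sub_cancel_right], k, hk, sub_add_cancel x k⟩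

theorem image_add_ker {R M N F : Type*} [Ring R] [AddCommGroup M] [Module R M]
    [AddCommGroup N] [Module R N] [FunLike F M N] [LinearMapClass F R M N] (T : F) (A : Set M) :
    T '' (A + LinearMap.ker (T : M →ₗ[R] N)) = T '' A := by
  ext y
  constructor
  · rintro ⟨_, ⟨a, ha, k, hk, rfl⟩, rfl⟩
    exact ⟨a, ha, by simpa using LinearMap.mem_ker.1 hk⟩
  · rintro ⟨a, ha, rfl⟩
    exact ⟨a, subset_add_left A (zero_mem _) ha, rfl⟩

section FourierMotzkin

variable {𝕜 : Type*} [Field 𝕜] [LinearOrder 𝕜] [IsStrictOrderedRing 𝕜]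

/-- Fourier–Motzkin elimination of one variable. -/
theorem exists_forall_le_mul_iff {ι : Type*} {s : Set ι} (hs : s.Finite) (a b : ι → 𝕜) :
    (∃ t, ∀ i ∈ s, a i ≤ t * b i) ↔
      (∀ i ∈ s, b i = 0 → a i ≤ 0) ∧
        ∀ i ∈ s, 0 < b i → ∀ j ∈ s, b j < 0 → b i * a j ≤ b j * a i := by
  constructor
  · rintro ⟨t, ht⟩
    refine ⟨fun i hi hbi => by simpa [hbi] using ht i hi, fun i hi hbi j hj hbj => ?_⟩
    nlinarith [ht i hi, ht j hj]
  · rintro ⟨hzero, hpair⟩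
    obtain ⟨t, hlow, hupp⟩ := Set.Finite.nonempty_upperBounds_inter_lowerBounds
      ((hs.sep fun i => 0 < b i).image fun i => a i / b i)
      ((hs.sep fun j => b j < 0).image fun j => a j / b j) (by
        rintro _ ⟨i, ⟨hi, hbi⟩, rfl⟩ _ ⟨j, ⟨hj, hbj⟩, rfl⟩
        rw [div_le_iff₀ hbi, div_mul_eq_mul_div, le_div_iff_of_neg hbj]
        linarith [hpair i hi hbi j hj hbj])
    refine ⟨t, fun i hi => ?_⟩
    rcases lt_trichotomy (b i) 0 with hbi | hbi | hbi
    · exact (le_div_iff_of_neg hbi).1 (hupp ⟨i, ⟨hi, hbi⟩, rfl⟩)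
    · simpa [hbi] using hzero i hi hbi
    · exact (div_le_iff₀ hbi).1 (hlow ⟨i, ⟨hi, hbi⟩, rfl⟩)

variable {V : Type*} [AddCommGroup V] [Module 𝕜 V]

variable (𝕜) in
def IsPolyhedralCone (P : Set V) : Prop :=
  ∃ s : Set (Module.Dual 𝕜 V), s.Finite ∧ P = {x | ∀ g ∈ s, g x ≤ 0}

theorem IsPolyhedralCone.add_span_singleton {P : Set V} (hP : IsPolyhedralCone 𝕜 P) (e : V) :
    IsPolyhedralCone 𝕜 (P + (𝕜 ∙ e : Set V)) := by
  obtain ⟨s, hs, rfl⟩ := hP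
  refine ⟨{g ∈ s | g e = 0} ∪
      image2 (fun p q => p e • q - q e • p) {p ∈ s | 0 < p e} {q ∈ s | q e < 0},
    (hs.sep _).union ((hs.sep _).image2 _ (hs.sep _)), ?_⟩
  ext x
  have key := exists_forall_le_mul_iff hs (fun g => g x) (fun g => g e)
  simp only [mem_add_span_singleton_iff, mem_ofPred_eq, map_sub, map_smul, smul_eq_mul,
    sub_nonpos] at key ⊢
  rw [key]
  simp only [mem_union, or_imp, forall_and, forall_mem_image2, mem_ofPred_eq, LinearMap.sub_apply,
    LinearMap.smul_apply, smul_eq_mul, sub_nonpos, and_imp]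

theorem IsPolyhedralCone.add_submodule {P : Set V} (hP : IsPolyhedralCone 𝕜 P)
    {K : Submodule 𝕜 V} (hK : K.FG) : IsPolyhedralCone 𝕜 (P + (K : Set V)) := by
  induction K, hK using Submodule.fg_induction generalizing P with
  | singleton e => exact hP.add_span_singleton e
  | sup K₁ K₂ _ _ ih₁ ih₂ =>
    rw [Submodule.coe_sup, ← add_assoc]
    exact ih₂ (ih₁ hP)

end FourierMotzkin

theorem Finset.sum_mem_of_add_self_subset {G : Type*} [AddCommMonoid G] {v : ℕ → Set G}
    (h0 : ∀ n, (0 : G) ∈ v n) (hadd : ∀ n, v (n + 1) + v (n + 1) ⊆ v n) {x : ℕ → G}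
    (hx : ∀ n, x n ∈ v (n + 1)) {m : ℕ} {t : Finset ℕ} (ht : ∀ i ∈ t, m ≤ i) :
    ∑ i ∈ t, x i ∈ v m := by
  have hanti : Antitone v := antitone_nat_of_succ_le fun n y hy =>
    hadd n ⟨y, hy, 0, h0 _, add_zero y⟩
  classical
  induction t using Finset.induction_on_min generalizing m with
  | empty => simpa using h0 m
  | insert a t hat ih =>
    have ham : m ≤ a := ht a (Finset.mem_insert_self a t)
    rw [Finset.sum_insert fun ha => (hat a ha).false]
    exact hadd m (Set.add_mem_add (hanti (Nat.succ_le_succ ham) (hx a))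
      (ih fun i hi => Nat.succ_le_of_lt (ham.trans_lt (hat i hi))))

theorem tendsto_nhds_of_mem_closure_image {X Y : Type*} [TopologicalSpace X] [TopologicalSpace Y]
    [RegularSpace Y] {f : X → Y} {a : X} (hf : ContinuousAt f a) {v : ℕ → Set X}
    (hv : (𝓝 a).HasAntitoneBasis v) {z : ℕ → Y} (hz : ∀ n, z n ∈ closure (f '' v n)) :
    Tendsto z atTop (𝓝 (f a)) := by
  refine (closed_nhds_basis (f a)).tendsto_right_iff.2 fun C ⟨hC, hCc⟩ => ?_
  obtain ⟨i, -, hi⟩ := hv.toHasBasis.mem_iff.1 (hf hC)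
  filter_upwards [eventually_ge_atTop i] with n hn
  exact closure_minimal ((image_mono (hv.antitone hn)).trans (image_subset_iff.2 hi)) hCc (hz n)

theorem exists_seq_sub_sum_mem_closure_image {X Y F : Type*} [AddCommGroup X] [AddCommGroup Y]
    [TopologicalSpace Y] [IsTopologicalAddGroup Y] [FunLike F X Y] [AddMonoidHomClass F X Y]
    (T : F) {v : ℕ → Set X} (hv : ∀ n, closure (T '' v n) ∈ 𝓝 (0 : Y)) {y : Y}
    (hy : y ∈ closure (T '' v 0)) :
    ∃ x : ℕ → X, (∀ n, x n ∈ v n) ∧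
      ∀ n, y - ∑ i ∈ Finset.range n, T (x i) ∈ closure (T '' v n) := by
  have step : ∀ n, ∀ z ∈ closure (T '' v n),
      ∃ x ∈ v n, z - T x ∈ closure (T '' v (n + 1)) := by
    intro n z hz
    have hnhds : {w | z - w ∈ closure (T '' v (n + 1))} ∈ 𝓝 z :=
      (continuous_const.sub continuous_id).continuousAt.preimage_mem_nhds
        (by simpa using hv (n + 1))
    obtain ⟨_, hw, x, hx, rfl⟩ := mem_closure_iff_nhds.1 hz _ hnhds
    exact ⟨x, hx, hw⟩
  choose! next hnext_mem hnext_sub using step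
  let z : ℕ → Y := fun n => Nat.rec y (fun k zk => zk - T (next k zk)) n
  have hz : ∀ n, z n ∈ closure (T '' v n) := by
    intro n
    induction n with
    | zero => exact hy
    | succ n ih => exact hnext_sub n (z n) ih
  have hsum : ∀ n, y - ∑ i ∈ Finset.range n, T (next i (z i)) = z n := by
    intro n
    induction n with
    | zero => simp [z]
    | succ n ih => rw [Finset.sum_range_succ, ← sub_sub, ih]
  exact ⟨fun n => next n (z n), fun n => hnext_mem n (z n) (hz n), fun n => hsum n ▸ hz n⟩

/-- The completeness half of the open mapping theorem: `y` is written as `∑ T xᵢ` by successive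
approximation, and `∑ xᵢ` converges because `xᵢ` lies in the `i`-th set of a basis `u` of `𝓝 0`
with `u (n + 1) + u (n + 1) ⊆ u n`. -/
theorem image_mem_nhds_zero_of_closure_image_mem {X Y F : Type*} [AddCommGroup X]
    [UniformSpace X] [IsUniformAddGroup X] [CompleteSpace X] [FirstCountableTopology X]
    [AddCommGroup Y] [TopologicalSpace Y] [IsTopologicalAddGroup Y] [T2Space Y] [FunLike F X Y]
    [AddMonoidHomClass F X Y] (T : F) (hTc : Continuous T)
    (hT : ∀ V ∈ 𝓝 (0 : X), closure (T '' V) ∈ 𝓝 (0 : Y)) {U : Set X} (hU : U ∈ 𝓝 0) :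
    T '' U ∈ 𝓝 0 := by
  obtain ⟨W, hW, hWc, hWU⟩ := exists_mem_nhds_isClosed_subset hU
  obtain ⟨u, hu, hadd⟩ := IsTopologicalAddGroup.exists_antitone_basis_nhds_zero X
  obtain ⟨k, -, hk⟩ := hu.toHasBasis.mem_iff.1 hW
  have hv : (𝓝 (0 : X)).HasAntitoneBasis fun n => u (k + n) :=
    hu.comp_mono (fun _ _ h => by omega) (tendsto_atTop_mono (Nat.le_add_left · k) tendsto_id)
  have hv₁ : (𝓝 (0 : X)).HasAntitoneBasis fun n => u (k + (n + 1)) :=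
    hv.comp_mono (fun _ _ h => by omega) (tendsto_add_atTop_nat 1)
  have h0 : ∀ n, (0 : X) ∈ u (k + n) := fun n => mem_of_mem_nhds (hv.mem n)
  refine mem_of_superset (hT _ (hv.mem 1)) fun y hy => ?_
  obtain ⟨x, hxv, hxy⟩ :=
    exists_seq_sub_sum_mem_closure_image T (fun n => hT _ (hv₁.mem n)) hy
  have hsum : ∀ {m : ℕ} {t : Finset ℕ}, (∀ i ∈ t, m ≤ i) → ∑ i ∈ t, x i ∈ u (k + m) :=
    Finset.sum_mem_of_add_self_subset h0 (fun n => hadd (k + n)) hxv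
  have hx : Summable x := summable_iff_vanishing.2 fun e he => by
    obtain ⟨m, -, hm⟩ := hv.toHasBasis.mem_iff.1 he
    refine ⟨Finset.range m, fun t ht => hm (hsum fun i hi => ?_)⟩
    simpa using Finset.disjoint_left.1 ht hi
  have hσW : ∑' i, x i ∈ W := hWc.mem_of_tendsto hx.hasSum.tendsto_sum_nat
    (Eventually.of_forall fun n => hk (hsum fun i _ => Nat.zero_le i))
  have hTσ : T (∑' i, x i) = y := by
    refine tendsto_nhds_unique (hx.hasSum.map T hTc).tendsto_sum_nat ?_
    simpa using (tendsto_const_nhds (x := y)).sub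
      (tendsto_nhds_of_mem_closure_image hTc.continuousAt hv₁ hxy)
  exact ⟨∑' i, x i, hWU hσW, hTσ⟩

/-- The Baire category half of the open mapping theorem. -/
theorem closure_image_mem_nhds_zero {X Y F : Type*} [AddCommGroup X] [Module ℝ X]
    [TopologicalSpace X] [IsTopologicalAddGroup X] [ContinuousSMul ℝ X] [AddCommGroup Y]
    [Module ℝ Y] [TopologicalSpace Y] [IsTopologicalAddGroup Y] [ContinuousConstSMul ℝ Y]
    [BaireSpace Y] [FunLike F X Y] [LinearMapClass F ℝ X Y] (T : F) (hT : Surjective T)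
    {V : Set X} (hV : V ∈ 𝓝 0) : closure (T '' V) ∈ 𝓝 0 := by
  obtain ⟨W, hW, -, hWneg, hWV⟩ := exists_closed_nhds_zero_neg_eq_add_subset hV
  have hcover : ⋃ n : ℕ, ((n : ℝ) + 1) • closure (T '' W) = univ := by
    refine eq_univ_of_forall fun y => ?_
    obtain ⟨x, rfl⟩ := hT y
    obtain ⟨n, hn⟩ := ((tendsto_natCast_atTop_cobounded.comp
      (tendsto_add_atTop_nat 1)).eventually (absorbent_nhds_zero (𝕜 := ℝ) hW x)).exists
    have hx : x ∈ ((n : ℝ) + 1) • W := by simpa using hn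
    refine mem_iUnion.2 ⟨n, smul_set_mono subset_closure ?_⟩
    rw [← image_smul_set]
    exact mem_image_of_mem T hx
  obtain ⟨n, hn⟩ := nonempty_interior_of_iUnion_of_closed
    (fun n => isClosed_closure.smul_of_ne_zero (by positivity)) hcover
  rw [interior_smul₀ (by positivity)] at hn
  obtain ⟨y₀, hy₀⟩ := smul_set_nonempty.1 hn
  have hsub : closure (T '' W) - closure (T '' W) ∈ 𝓝 0 := mem_interior_iff_mem_nhds.1
    (subset_interior_sub_left ⟨y₀, hy₀, y₀, interior_subset hy₀, sub_self y₀⟩)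
  have hWW : T '' W - T '' W ⊆ T '' V := by
    rintro _ ⟨_, ⟨a, ha, rfl⟩, _, ⟨b, hb, rfl⟩, rfl⟩
    refine ⟨a - b, hWV ?_, map_sub T a b⟩
    rw [sub_eq_add_neg]
    exact add_mem_add ha (hWneg ▸ neg_mem_neg.2 hb)
  refine mem_of_superset hsub (image2_subset_iff.2 fun y₁ hy₁ y₂ hy₂ => closure_mono hWW ?_)
  exact map_mem_closure₂ continuous_sub hy₁ hy₂ fun a ha b hb => sub_mem_sub ha hb

theorem ContinuousLinearMap.isOpenMap_of_baireSpace {X Y : Type*} [AddCommGroup X] [Module ℝ X]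
    [UniformSpace X] [IsUniformAddGroup X] [ContinuousSMul ℝ X] [CompleteSpace X]
    [FirstCountableTopology X] [AddCommGroup Y] [Module ℝ Y] [TopologicalSpace Y]
    [IsTopologicalAddGroup Y] [ContinuousConstSMul ℝ Y] [BaireSpace Y] [T2Space Y]
    (T : X →L[ℝ] Y) (hT : Surjective T) : IsOpenMap T :=
  IsTopologicalAddGroup.isOpenMap_iff_nhds_zero.2 <| le_map fun _ hU =>
    image_mem_nhds_zero_of_closure_image_mem T T.continuous
      (fun _ hV => closure_image_mem_nhds_zero T hT hV) hU

theorem ContinuousLinearMap.exists_comp_eq_of_isQuotientMap {R M N L : Type*} [Ring R]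
    [AddCommGroup M] [Module R M] [TopologicalSpace M] [AddCommGroup N] [Module R N]
    [TopologicalSpace N] [AddCommGroup L] [Module R L] [TopologicalSpace L]
    (T : M →L[R] N) (hT : IsQuotientMap T) (f : M →L[R] L)
    (hf : LinearMap.ker (T : M →ₗ[R] N) ≤ LinearMap.ker (f : M →ₗ[R] L)) :
    ∃ g : N →L[R] L, g.comp T = f := by
  let g : N →ₗ[R] L := (LinearMap.ker (T : M →ₗ[R] N)).liftQ f hf ∘ₗ
    ((T : M →ₗ[R] N).quotKerEquivOfSurjective hT.surjective).symm
  have hg : ∀ x, g (T x) = f x := fun x => by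
    have := LinearMap.quotKerEquivOfSurjective_symm_apply (T : M →ₗ[R] N) hT.surjective x
    simp only [ContinuousLinearMap.coe_coe] at this
    simp [g, this]
  exact ⟨⟨g, hT.continuous_iff.2 (by simpa [Function.comp_def, hg] using f.continuous)⟩,
    ContinuousLinearMap.ext hg⟩

section ClosedPolyhedralCone

variable {X : Type*} [AddCommGroup X] [Module ℝ X] [TopologicalSpace X]

theorem IsClosedPolyhedralCone.zero_mem {P : Set X} (hP : IsClosedPolyhedralCone P) :
    (0 : X) ∈ P := by
  obtain ⟨n, -, f, rfl⟩ := hP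
  simp

theorem isClosedPolyhedralCone_of_finite {s : Set (X →L[ℝ] ℝ)} (hs : s.Finite) :
    IsClosedPolyhedralCone {x | ∀ f ∈ s, f x ≤ 0} := by
  -- the zero functional is added so that the enumeration is nonempty, as `0 < n` is required
  obtain ⟨n, e, he⟩ := (hs.insert 0).fin_embedding
  refine ⟨n, Nat.pos_of_ne_zero fun hn => ?_, e, ?_⟩
  · subst hn
    simpa using congrArg (0 ∈ ·) he
  · ext x
    simp [← Set.forall_mem_range (f := ⇑e) (p := fun f : X →L[ℝ] ℝ => f x ≤ 0), he]

theorem IsClosedPolyhedralCone.add_submodule {P : Set X} (hP : IsClosedPolyhedralCone P)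
    (K : Submodule ℝ X) : IsClosedPolyhedralCone (P + (K : Set X)) := by
  obtain ⟨n, -, f, rfl⟩ := hP
  let φ : X →ₗ[ℝ] (Fin n → ℝ) := LinearMap.pi fun k => (f k : X →ₗ[ℝ] ℝ)
  have hφ : Continuous φ := continuous_pi fun k => (f k).continuous
  have hQ : IsPolyhedralCone ℝ {z : Fin n → ℝ | ∀ k, z k ≤ 0} :=
    ⟨range LinearMap.proj, finite_range _, by ext; simp⟩
  obtain ⟨s, hs, hsQ⟩ := hQ.add_submodule (IsNoetherian.noetherian (K.map φ))
  have hφQ : {x | ∀ k, f k x ≤ 0} = φ ⁻¹' {z | ∀ k, z k ≤ 0} := rfl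
  rw [hφQ, LinearMap.preimage_add_submodule, hsQ]
  convert isClosedPolyhedralCone_of_finite
    (hs.image fun g => ⟨g ∘ₗ φ, (LinearMap.continuous_of_finiteDimensional g).comp hφ⟩) using 1
  ext x
  simp

theorem IsClosedPolyhedralCone.image_of_ker_subset {Y : Type*} [AddCommGroup Y] [Module ℝ Y]
    [TopologicalSpace Y] {P : Set X} (hP : IsClosedPolyhedralCone P) (T : X →L[ℝ] Y)
    (hT : IsQuotientMap T) (hker : (LinearMap.ker (T : X →ₗ[ℝ] Y) : Set X) ⊆ P) :
    IsClosedPolyhedralCone (T '' P) := by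
  obtain ⟨n, hn, f, rfl⟩ := hP
  -- a functional that is nonpositive on the subspace `ker T` vanishes there
  have hf : ∀ k, LinearMap.ker (T : X →ₗ[ℝ] Y) ≤ LinearMap.ker (f k : X →ₗ[ℝ] ℝ) :=
    fun k x hx => le_antisymm (hker hx k) (by simpa using hker (neg_mem hx) k)
  choose g hg using fun k => T.exists_comp_eq_of_isQuotientMap hT (f k) (hf k)
  refine ⟨n, hn, g, ?_⟩
  rw [show {x | ∀ k, f k x ≤ 0} = T ⁻¹' {y | ∀ k, g k y ≤ 0} by ext; simp [← hg]]
  exact image_preimage_eq _ hT.surjective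

end ClosedPolyhedralCone

/-- If `X`, `Y` are real Fréchet spaces (complete metrizable topological vector spaces)
and `T : X → Y` is a surjective continuous linear map, then the image of a closed
polyhedral cone of `X` under `T` is a closed polyhedral cone of `Y`. -/
theorem image_of_closedPolyhedralCone_isClosedPolyhedralCone
    {X Y : Type*}
    [AddCommGroup X] [Module ℝ X] [UniformSpace X] [IsUniformAddGroup X]
    [ContinuousSMul ℝ X] [CompleteSpace X] [TopologicalSpace.MetrizableSpace X]
    [AddCommGroup Y] [Module ℝ Y] [UniformSpace Y] [IsUniformAddGroup Y]
    [ContinuousSMul ℝ Y] [CompleteSpace Y] [TopologicalSpace.MetrizableSpace Y]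
    (T : X →L[ℝ] Y) (hT : Function.Surjective T)
    (A : Set X) (hA : IsClosedPolyhedralCone A) :
    IsClosedPolyhedralCone (T '' A) := by
  -- makes `Y` completely metrizable, hence a Baire space
  have : (𝓤 Y).IsCountablyGenerated := IsUniformAddGroup.uniformity_countably_generated
  have hTq : IsQuotientMap T := (T.isOpenMap_of_baireSpace hT).isQuotientMap T.continuous hT
  rw [← image_add_ker T A]
  exact (hA.add_submodule _).image_of_ker_subset T hTq (subset_add_right _ hA.zero_mem)
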